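/- arXiv:math/9901159 — 2 statements merged into one kernel-verified Lean document; each statement's English description precedes it below -/
import Mathlib

section
/- Let J be a nonempty proper subset of {0,…,d}. Then the image {ρ'(z)(δ_0) : z ∈ A_J} of A_J applied to δ_0 is exactly span_K{δ_μ : Σ_k μ(k) = 0, J(μ) ⊆ J, and {k : μ(k) < 0} ∩ J = ∅}. -/
open UniversalEnvelopingAlgebra

attribute [local instance] LieRing.ofAssociativeRing

/-!
Every generator `E_ij` with `i ∈ J`, `j ∉ J` moves a basis vector `δ_μ` to a multiple of
`δ_{μ + ε_i - ε_j}`, and this shift preserves the admissibility conditions on `μ`; hence the span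
of the admissible `δ_μ` is stable under `A_J` and contains `δ_0`. Conversely, an admissible
`μ ≠ 0` has some `μ i > 0` (so `i ∈ J`) and some `μ j < 0` (so `j ∉ J`); then
`E_ij δ_{μ - ε_i + ε_j} = μ(j) δ_μ` with `μ(j) ≠ 0`, and induction on the positive part of `μ`
reaches every admissible `δ_μ` from `δ_0`.
-/

open Finsupp

section Weights

variable {ι : Type*} [Fintype ι]

def IsAdmissibleWeight (J : Set ι) (μ : ι → ℤ) : Prop :=
  (∑ k, μ k) = 0 ∧ {k | 0 < μ k} ⊆ J ∧ {k | μ k < 0} ∩ J = ∅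

lemma exists_pos_and_exists_neg_of_sum_eq_zero {μ : ι → ℤ} (hsum : ∑ k, μ k = 0) (hμ : μ ≠ 0) :
    (∃ i, 0 < μ i) ∧ ∃ j, μ j < 0 := by
  obtain ⟨k, hk⟩ := Function.ne_iff.mp hμ
  constructor <;> by_contra! h
  · exact hk ((Finset.sum_eq_zero_iff_of_nonpos fun k _ => h k).mp hsum k (Finset.mem_univ k))
  · exact hk ((Finset.sum_eq_zero_iff_of_nonneg fun k _ => h k).mp hsum k (Finset.mem_univ k))

namespace IsAdmissibleWeight

variable {J : Set ι} {μ : ι → ℤ}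

lemma zero : IsAdmissibleWeight J 0 := by
  simp [IsAdmissibleWeight]

lemma notMem_of_neg (hμ : IsAdmissibleWeight J μ) {k : ι} (hk : μ k < 0) : k ∉ J :=
  fun hkJ => (Set.eq_empty_iff_forall_notMem.mp hμ.2.2) k ⟨hk, hkJ⟩

lemma of_sum_eq_zero_of_forall {ν : ι → ℤ} (hsum : ∑ k, ν k = 0) (hpos : ∀ k, 0 < ν k → k ∈ J)
    (hneg : ∀ k, ν k < 0 → k ∉ J) : IsAdmissibleWeight J ν :=
  ⟨hsum, hpos, Set.eq_empty_iff_forall_notMem.mpr fun k hk => hneg k hk.1 hk.2⟩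

variable [DecidableEq ι]

lemma add_single_sub_single (hμ : IsAdmissibleWeight J μ) {i j : ι} (hi : i ∈ J) (hj : j ∉ J) :
    IsAdmissibleWeight J (μ + Pi.single i 1 - Pi.single j 1) := by
  have hij : i ≠ j := fun h => hj (h ▸ hi)
  refine of_sum_eq_zero_of_forall ?_ (fun k hk => ?_) (fun k hk hkJ => ?_)
  · simp [Finset.sum_add_distrib, Finset.sum_sub_distrib, hμ.1]
  · by_cases hki : k = i
    · exact hki ▸ hi
    by_cases hkj : k = j
    · subst hkj
      simp [hij.symm] at hk
      exact absurd (hμ.2.1 (show 0 < μ k by omega)) hj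
    · simp [hki, hkj] at hk
      exact hμ.2.1 hk
  · by_cases hki : k = i
    · subst hki
      simp [hij] at hk
      exact hμ.notMem_of_neg (show μ k < 0 by omega) hi
    by_cases hkj : k = j
    · exact hj (hkj ▸ hkJ)
    · simp [hki, hkj] at hk
      exact hμ.notMem_of_neg hk hkJ

lemma sub_single_add_single (hμ : IsAdmissibleWeight J μ) {i j : ι} (hi : 0 < μ i)
    (hj : μ j < 0) : IsAdmissibleWeight J (μ - Pi.single i 1 + Pi.single j 1) := by
  have hij : i ≠ j := fun h => by rw [h] at hi; omega
  refine of_sum_eq_zero_of_forall ?_ (fun k hk => ?_) (fun k hk hkJ => ?_)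
  · simp [Finset.sum_add_distrib, Finset.sum_sub_distrib, hμ.1]
  · by_cases hki : k = i
    · exact hki ▸ hμ.2.1 hi
    by_cases hkj : k = j
    · subst hkj
      simp [hij.symm] at hk
      omega
    · simp [hki, hkj] at hk
      exact hμ.2.1 hk
  · by_cases hki : k = i
    · subst hki
      simp [hij] at hk
      omega
    by_cases hkj : k = j
    · exact hμ.notMem_of_neg hj (hkj ▸ hkJ)
    · simp [hki, hkj] at hk
      exact hμ.notMem_of_neg hk hkJ

end IsAdmissibleWeight

variable [DecidableEq ι] in
lemma sum_toNat_sub_single_add_single_lt {μ : ι → ℤ} {i j : ι} (hi : 0 < μ i) (hj : μ j < 0) :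
    ∑ k, ((μ - Pi.single i 1 + Pi.single j 1 : ι → ℤ) k).toNat < ∑ k, (μ k).toNat := by
  have hij : i ≠ j := fun h => by rw [h] at hi; omega
  refine Finset.sum_lt_sum (fun k _ => ?_) ⟨i, Finset.mem_univ i, by simp [hij]; omega⟩
  by_cases hki : k = i
  · subst hki; simp [hij]
  by_cases hkj : k = j
  · subst hkj; simp [hij.symm]; omega
  · simp [hki, hkj]

end Weights

lemma AlgHom.mapsTo_of_mem_adjoin {K A M : Type*} [CommSemiring K] [Semiring A] [Algebra K A]
    [AddCommMonoid M] [Module K M] (ρ : A →ₐ[K] Module.End K M) {s : Set A}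
    {p : Submodule K M} (hs : ∀ a ∈ s, Set.MapsTo (ρ a) p p) {z : A}
    (hz : z ∈ Algebra.adjoin K s) : Set.MapsTo (ρ z) p p := by
  induction hz using Algebra.adjoin_induction with
  | mem a ha => exact hs a ha
  | algebraMap r => rw [AlgHom.commutes]; exact fun w hw => p.smul_mem r hw
  | add x y _ _ hx hy => rw [map_add]; exact fun w hw => p.add_mem (hx hw) (hy hw)
  | mul x y _ _ hx hy => rw [map_mul]; exact hx.comp hy

section Representation

variable {ι : Type*} [Fintype ι] [DecidableEq ι] {A : Type*} [Semiring A]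

noncomputable def admissibleSpan (K : Type*) [CommRing K] (J : Set ι) :
    Submodule K ((ι → ℤ) →₀ K) :=
  Submodule.span K ((fun μ => single μ 1) '' {μ | IsAdmissibleWeight J μ})

variable {K : Type*} [Field K] [Algebra K A] (ρ : A →ₐ[K] Module.End K ((ι → ℤ) →₀ K))
  (e : ι → ι → A)
  (hρ : ∀ i j, i ≠ j → ∀ ν : ι → ℤ,
    ρ (e i j) (single ν 1) = (ν j - 1) • single (ν + Pi.single i 1 - Pi.single j 1) 1)
  (J : Set ι)
include hρ

lemma mapsTo_admissibleSpan {i j : ι} (hi : i ∈ J) (hj : j ∉ J) :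
    Set.MapsTo (ρ (e i j)) (admissibleSpan K J) (admissibleSpan K J) := by
  intro w hw
  induction hw using Submodule.span_induction with
  | mem w hw =>
    obtain ⟨μ, hμ, rfl⟩ := hw
    rw [hρ i j (fun h => hj (h ▸ hi)), ← Int.cast_smul_eq_zsmul K]
    exact Submodule.smul_mem _ _ (Submodule.subset_span ⟨_, hμ.add_single_sub_single hi hj, rfl⟩)
  | zero => simp
  | add u v _ _ hu hv => simpa using Submodule.add_mem _ hu hv
  | smul c u _ hu => simpa using Submodule.smul_mem _ c hu

lemma exists_mem_adjoin_apply_single_zero [CharZero K] {μ : ι → ℤ}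
    (hμ : IsAdmissibleWeight J μ) :
    ∃ z ∈ Algebra.adjoin K {w | ∃ i ∈ J, ∃ j ∉ J, w = e i j}, ρ z (single 0 1) = single μ 1 := by
  induction h : ∑ k, (μ k).toNat using Nat.strong_induction_on generalizing μ with
  | _ n ih =>
  by_cases hμ0 : μ = 0
  · exact ⟨1, Subalgebra.one_mem _, by simp [hμ0]⟩
  obtain ⟨⟨i, hi⟩, ⟨j, hj⟩⟩ := exists_pos_and_exists_neg_of_sum_eq_zero hμ.1 hμ0
  have hij : i ≠ j := fun h => by rw [h] at hi; omega
  obtain ⟨z, hz, hzμ⟩ := ih _ (h ▸ sum_toNat_sub_single_add_single_lt hi hj)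
    (hμ.sub_single_add_single hi hj) rfl
  have hgen : e i j ∈ Algebra.adjoin K {w | ∃ i ∈ J, ∃ j ∉ J, w = e i j} :=
    Algebra.subset_adjoin ⟨i, hμ.2.1 hi, j, hμ.notMem_of_neg hj, rfl⟩
  refine ⟨(μ j : K)⁻¹ • (e i j * z), Subalgebra.smul_mem _ (Subalgebra.mul_mem _ hgen hz) _, ?_⟩
  have hμj : (μ j : K) ≠ 0 := Int.cast_ne_zero.mpr hj.ne
  rw [map_smul, LinearMap.smul_apply, map_mul, Module.End.mul_apply, hzμ, hρ i j hij,
    ← Int.cast_smul_eq_zsmul K, smul_smul,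
    show μ - Pi.single i 1 + Pi.single j 1 + Pi.single i 1 - Pi.single j 1 = μ by abel]
  simp [hij.symm, hμj]

theorem image_adjoin_apply_single_zero [CharZero K] :
    (fun z => ρ z (single 0 1)) '' (Algebra.adjoin K {w | ∃ i ∈ J, ∃ j ∉ J, w = e i j} : Set A) =
      admissibleSpan K J := by
  set L : A →ₗ[K] (ι → ℤ) →₀ K := LinearMap.applyₗ (single 0 1) ∘ₗ ρ.toLinearMap
  suffices (Subalgebra.toSubmodule (Algebra.adjoin K _)).map L = admissibleSpan K J by
    rw [← this, Submodule.map_coe]; rfl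
  apply le_antisymm
  · rintro _ ⟨z, hz, rfl⟩
    have hgen : ∀ a ∈ {w | ∃ i ∈ J, ∃ j ∉ J, w = e i j},
        Set.MapsTo (ρ a) (admissibleSpan K J) (admissibleSpan K J) := by
      rintro _ ⟨i, hi, j, hj, rfl⟩
      exact mapsTo_admissibleSpan ρ e hρ J hi hj
    exact AlgHom.mapsTo_of_mem_adjoin ρ hgen hz
      (Submodule.subset_span ⟨0, IsAdmissibleWeight.zero, rfl⟩)
  · rw [admissibleSpan, Submodule.span_le]
    rintro _ ⟨μ, hμ, rfl⟩
    exact exists_mem_adjoin_apply_single_zero ρ e hρ J hμ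

end Representation

theorem stmt_11_general (K : Type) [Field K] [CharZero K] (d : ℕ)
    (ρ' : UniversalEnvelopingAlgebra K (Matrix (Fin (d+1)) (Fin (d+1)) K) →ₐ[K]
        Module.End K ((Fin (d+1) → ℤ) →₀ K))
    (hρ'₁ : ∀ (i j : Fin (d+1)), i ≠ j → ∀ ν : Fin (d+1) → ℤ,
      ρ' (ι K (Matrix.single i j (1:K))) (Finsupp.single ν (1:K)) =
        (ν j - 1) • Finsupp.single (ν + Pi.single i 1 - Pi.single j 1) (1:K))
    (J : Set (Fin (d+1)))
    (AJ : Subalgebra K (UniversalEnvelopingAlgebra K (Matrix (Fin (d+1)) (Fin (d+1)) K)))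
    (hAJ : AJ = Algebra.adjoin K
      {w | ∃ i ∈ J, ∃ j ∉ J, w = ι K (Matrix.single i j (1:K))}) :
    (fun z => ρ' z (Finsupp.single (0 : Fin (d+1) → ℤ) (1:K))) '' (AJ : Set _) =
      ↑(Submodule.span K {w : (Fin (d+1) → ℤ) →₀ K | ∃ μ : Fin (d+1) → ℤ,
          (∑ k, μ k) = 0 ∧ {k | 0 < μ k} ⊆ J ∧ {k | μ k < 0} ∩ J = ∅ ∧
          w = Finsupp.single μ (1:K)}) := by
  subst hAJ
  rw [image_adjoin_apply_single_zero ρ' (fun i j => ι K (Matrix.single i j 1)) hρ'₁ J,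
    admissibleSpan]
  congr 2
  ext w
  simp [IsAdmissibleWeight, and_assoc, eq_comm]

/-- For J a nonempty proper subset of {0,…,d}, the image of A_J
applied to δ_0 is exactly span_K{δ_μ : Σμ = 0, J(μ) ⊆ J, {k : μ(k) < 0} ∩ J = ∅}. -/
theorem stmt_11 (K : Type) [Field K] [CharZero K] (d : ℕ) (hd : 1 ≤ d)
    (ρ' : UniversalEnvelopingAlgebra K (Matrix (Fin (d+1)) (Fin (d+1)) K) →ₐ[K]
        Module.End K ((Fin (d+1) → ℤ) →₀ K))
    (hρ'₁ : ∀ (i j : Fin (d+1)), i ≠ j → ∀ ν : Fin (d+1) → ℤ,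
      ρ' (ι K (Matrix.single i j (1:K))) (Finsupp.single ν (1:K)) =
        (ν j - 1) • Finsupp.single (ν + Pi.single i 1 - Pi.single j 1) (1:K))
    (hρ'₂ : ∀ (k : Fin (d+1)) (ν : Fin (d+1) → ℤ),
      ρ' (ι K (Matrix.single k k (1:K))) (Finsupp.single ν (1:K)) =
        ν k • Finsupp.single ν (1:K))
    (J : Set (Fin (d+1))) (hJ : J.Nonempty) (hJ' : J ≠ Set.univ)
    (AJ : Subalgebra K (UniversalEnvelopingAlgebra K (Matrix (Fin (d+1)) (Fin (d+1)) K)))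
    (hAJ : AJ = Algebra.adjoin K
      {w | ∃ i ∈ J, ∃ j ∉ J, w = ι K (Matrix.single i j (1:K))}) :
    (fun z => ρ' z (Finsupp.single (0 : Fin (d+1) → ℤ) (1:K))) '' (AJ : Set _) =
      ↑(Submodule.span K {w : (Fin (d+1) → ℤ) →₀ K | ∃ μ : Fin (d+1) → ℤ,
          (∑ k, μ k) = 0 ∧ {k | 0 < μ k} ⊆ J ∧ {k | μ k < 0} ∩ J = ∅ ∧
          w = Finsupp.single μ (1:K)}) :=
  stmt_11_general K d ρ' hρ'₁ J AJ hAJ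
end

section
/- Let J be a nonempty proper subset of {0,…,d}. For every z ∈ M_J° and every x ∈ 𝔩(J), the element ι(x)z − zι(x) again lies in M_J°. -/
/-!
Let `W` be the span of the `δ_μ` allowed in the definition of `M_J°`. The brackets `[x, E_ab]`
(`a ∈ J`, `b ∉ J`) are again combinations of such `E_ac`, so `ad(ι x)` preserves `A_J`. For the
condition on `δ_0` it suffices to treat `x = E_ij` with `i, j ∉ J`, where
`ρ'([E_ij, z]) δ_0 = ρ'(E_ij) ρ'(z) δ_0 + ρ'(z) δ_{ε_i - ε_j}` for `i ≠ j`. The first term lies in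
`W` because `ρ'(E_ij)` preserves `W`. For the second, the weighted shift
`T_ij : δ_ν ↦ [ν i = 0] (1 - ν j) δ_{ν + ε_i - ε_j}` sends `δ_0` to `δ_{ε_i - ε_j}`, preserves `W`,
and commutes with every `ρ'(E_ab)`, `a ∈ J`, hence with `ρ'(z)`; so
`ρ'(z) δ_{ε_i - ε_j} = T_ij ρ'(z) δ_0 ∈ W`.
-/

open UniversalEnvelopingAlgebra

attribute [local instance 100] LieRing.ofAssociativeRing

section WeightedShift

variable (K : Type*) [CommRing K] {n : Type*}

noncomputable def weightedShift (c : (n → ℤ) → ℤ) (s : n → ℤ) : Module.End K ((n → ℤ) →₀ K) :=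
  Finsupp.lsum K fun ν => c ν • Finsupp.lsingle (ν + s)

variable {K}

@[simp]
lemma weightedShift_single (c : (n → ℤ) → ℤ) (s ν : n → ℤ) (a : K) :
    weightedShift K c s (Finsupp.single ν a) = c ν • Finsupp.single (ν + s) a := by
  simp [weightedShift]

lemma weightedShift_mul (c c' : (n → ℤ) → ℤ) (s s' : n → ℤ) :
    weightedShift K c s * weightedShift K c' s' =
      weightedShift K (fun ν => c' ν * c (ν + s')) (s' + s) := by
  refine Finsupp.lhom_ext fun ν a => ?_
  simp only [Module.End.mul_apply, weightedShift_single, map_zsmul, smul_smul, add_assoc]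

lemma commute_weightedShift {c c' : (n → ℤ) → ℤ} {s s' : n → ℤ}
    (h : ∀ ν, c' ν * c (ν + s') = c ν * c' (ν + s)) :
    Commute (weightedShift K c s) (weightedShift K c' s') := by
  rw [Commute, SemiconjBy, weightedShift_mul, weightedShift_mul, add_comm s, funext h]

variable (K) [DecidableEq n]

noncomputable def rootOp (a b : n) : Module.End K ((n → ℤ) →₀ K) :=
  weightedShift K (fun ν => ν b - 1) (Pi.single a 1 - Pi.single b 1)

noncomputable def intertwiner (i j : n) : Module.End K ((n → ℤ) →₀ K) :=
  weightedShift K (fun ν => if ν i = 0 then 1 - ν j else 0) (Pi.single i 1 - Pi.single j 1)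

variable {K}

lemma commute_intertwiner_rootOp {a b i j : n} (hai : a ≠ i) (haj : a ≠ j) (hij : i ≠ j) :
    Commute (intertwiner K i j) (rootOp K a b) := by
  refine commute_weightedShift fun ν => ?_
  simp only [Pi.add_apply, Pi.sub_apply, Pi.single_apply, hai.symm, haj.symm]
  split_ifs <;> subst_vars <;> grind

end WeightedShift

section BoundaryWeights

variable (K : Type*) [CommRing K] {n : Type*} [Fintype n]

noncomputable def boundaryWeightSpan (J : Set n) : Submodule K ((n → ℤ) →₀ K) :=
  Submodule.span K {w : (n → ℤ) →₀ K | ∃ μ : n → ℤ,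
      (∑ k, μ k) = 0 ∧ (∀ k ∈ J, μ k = 1) ∧ (∀ k ∉ J, μ k ≤ 0) ∧ w = Finsupp.single μ (1:K)} ⊔
    Submodule.span K {w : (n → ℤ) →₀ K | ∃ μ : n → ℤ,
      J ⊆ {k | 0 < μ k} ∧ J ≠ {k | 0 < μ k} ∧ w = Finsupp.single μ (1:K)}

variable {K} {J : Set n}

lemma single_mem_boundaryWeightSpan_of_sum_eq_zero {μ : n → ℤ} (hsum : ∑ k, μ k = 0)
    (hJ : ∀ k ∈ J, μ k = 1) (hJc : ∀ k ∉ J, μ k ≤ 0) :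
    Finsupp.single μ (1:K) ∈ boundaryWeightSpan K J :=
  Submodule.mem_sup_left (Submodule.subset_span ⟨μ, hsum, hJ, hJc, rfl⟩)

lemma single_mem_boundaryWeightSpan_of_subset_of_ne {μ : n → ℤ} (hsub : J ⊆ {k | 0 < μ k})
    (hne : J ≠ {k | 0 < μ k}) :
    Finsupp.single μ (1:K) ∈ boundaryWeightSpan K J :=
  Submodule.mem_sup_right (Submodule.subset_span ⟨μ, hsub, hne, rfl⟩)

lemma single_mem_boundaryWeightSpan_of_pos {μ : n → ℤ} (hJ : ∀ k ∈ J, 0 < μ k) {i : n}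
    (hi : i ∉ J) (hμi : 0 < μ i) :
    Finsupp.single μ (1:K) ∈ boundaryWeightSpan K J :=
  single_mem_boundaryWeightSpan_of_subset_of_ne hJ fun h => hi (h ▸ hμi)

lemma boundaryWeightSpan_le_comap {L : Module.End K ((n → ℤ) →₀ K)}
    (hB : ∀ μ : n → ℤ, ∑ k, μ k = 0 → (∀ k ∈ J, μ k = 1) → (∀ k ∉ J, μ k ≤ 0) →
      L (Finsupp.single μ 1) ∈ boundaryWeightSpan K J)
    (hpos : ∀ μ : n → ℤ, J ⊆ {k | 0 < μ k} → J ≠ {k | 0 < μ k} →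
      L (Finsupp.single μ 1) ∈ boundaryWeightSpan K J) :
    boundaryWeightSpan K J ≤ (boundaryWeightSpan K J).comap L := by
  refine sup_le (Submodule.span_le.mpr ?_) (Submodule.span_le.mpr ?_)
  · rintro _ ⟨μ, hsum, hJ, hJc, rfl⟩
    exact hB μ hsum hJ hJc
  · rintro _ ⟨μ, hsub, hne, rfl⟩
    exact hpos μ hsub hne

lemma boundaryWeightSpan_le_comap_of_forall_single {L : Module.End K ((n → ℤ) →₀ K)}
    (hL : ∀ μ : n → ℤ, ∃ c : ℤ, L (Finsupp.single μ 1) = c • Finsupp.single μ 1) :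
    boundaryWeightSpan K J ≤ (boundaryWeightSpan K J).comap L := by
  refine boundaryWeightSpan_le_comap (fun μ hsum hJ hJc => ?_) (fun μ hsub hne => ?_) <;>
    obtain ⟨c, hc⟩ := hL μ <;> rw [hc] <;> refine zsmul_mem ?_ c
  · exact single_mem_boundaryWeightSpan_of_sum_eq_zero hsum hJ hJc
  · exact single_mem_boundaryWeightSpan_of_subset_of_ne hsub hne

variable [DecidableEq n]

lemma boundaryWeightSpan_le_comap_intertwiner {i j : n} (hi : i ∉ J) (hj : j ∉ J) (hij : i ≠ j) :
    boundaryWeightSpan K J ≤ (boundaryWeightSpan K J).comap (intertwiner K i j) := by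
  suffices h : ∀ μ : n → ℤ, (∀ k ∈ J, 0 < μ k) →
      intertwiner K i j (Finsupp.single μ 1) ∈ boundaryWeightSpan K J from
    boundaryWeightSpan_le_comap (fun μ _ hJ _ => h μ fun k hk => by simp [hJ k hk])
      (fun μ hsub _ => h μ hsub)
  intro μ hJ
  rw [intertwiner, weightedShift_single]
  split_ifs with hμi
  · refine zsmul_mem (single_mem_boundaryWeightSpan_of_pos (fun k hk => ?_) hi ?_) _
    · have := hJ k hk
      simp [ne_of_mem_of_not_mem hk hi, ne_of_mem_of_not_mem hk hj, this]
    · simp [hij, hμi]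
  · simp

lemma boundaryWeightSpan_le_comap_rootOp {i j : n} (hi : i ∉ J) (hj : j ∉ J) (hij : i ≠ j) :
    boundaryWeightSpan K J ≤ (boundaryWeightSpan K J).comap (rootOp K i j) := by
  have shift_apply (μ : n → ℤ) (k : n) : (μ + (Pi.single i 1 - Pi.single j 1) : n → ℤ) k =
      μ k + (if k = i then 1 else 0) - (if k = j then 1 else 0) := by
    simp [Pi.single_apply, add_sub_assoc]
  have shift_apply_of_mem (μ : n → ℤ) {k : n} (hk : k ∈ J) :
      (μ + (Pi.single i 1 - Pi.single j 1) : n → ℤ) k = μ k := by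
    simp [shift_apply, ne_of_mem_of_not_mem hk hi, ne_of_mem_of_not_mem hk hj]
  refine boundaryWeightSpan_le_comap (fun μ hsum hJ hJc => ?_) (fun μ hsub hne => ?_)
  all_goals rw [rootOp, weightedShift_single]
  · refine zsmul_mem ?_ _
    by_cases hμi : μ i = 0
    · refine single_mem_boundaryWeightSpan_of_pos (fun k hk => ?_) hi ?_
      · simp [shift_apply_of_mem μ hk, hJ k hk]
      · simp [shift_apply, hij, hμi]
    · refine single_mem_boundaryWeightSpan_of_sum_eq_zero ?_
        (fun k hk => (shift_apply_of_mem μ hk).trans (hJ k hk)) (fun k hk => ?_)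
      · simp [Finset.sum_add_distrib, hsum]
      · have := hJc k hk
        have := hJc i hi
        rw [shift_apply]
        split_ifs <;> subst_vars <;> omega
  · by_cases hμj : μ j = 1
    · simp [hμj]
    refine zsmul_mem ?_ _
    obtain ⟨m, hmμ, hmJ⟩ := Set.exists_of_ssubset (ssubset_iff_subset_ne.mpr ⟨hsub, hne⟩)
    have hμm : 0 < μ m := hmμ
    -- Some coordinate outside `J` stays positive: `i` if `μ i ≥ 0`, else `m` (`μ j ≥ 2` if `m = j`).
    have hJ (k) (hk : k ∈ J) : 0 < (μ + (Pi.single i 1 - Pi.single j 1) : n → ℤ) k := by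
      rw [shift_apply_of_mem μ hk]; exact hsub hk
    by_cases hμi : 0 ≤ μ i
    · exact single_mem_boundaryWeightSpan_of_pos hJ hi (by rw [shift_apply]; simp [hij]; omega)
    · refine single_mem_boundaryWeightSpan_of_pos hJ hmJ ?_
      rw [shift_apply]
      split_ifs <;> subst_vars <;> omega

end BoundaryWeights

lemma mul_sub_mul_mem_adjoin {R A : Type*} [CommRing R] [Ring A] [Algebra R A] {s : Set A} {a : A}
    (hs : ∀ b ∈ s, a * b - b * a ∈ Algebra.adjoin R s) {u : A} (hu : u ∈ Algebra.adjoin R s) :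
    a * u - u * a ∈ Algebra.adjoin R s := by
  induction hu using Algebra.adjoin_induction with
  | mem b hb => exact hs b hb
  | algebraMap r => simp [Algebra.commutes]
  | add u v _ _ hu hv =>
    rw [mul_add, add_mul, add_sub_add_comm]
    exact add_mem hu hv
  | mul u v hu' hv' hu hv =>
    rw [show a * (u * v) - u * v * a = (a * u - u * a) * v + u * (a * v - v * a) by noncomm_ring]
    exact add_mem (mul_mem hu hv') (mul_mem hu' hv)

lemma Matrix.mem_span_single_one {m R : Type*} [Fintype m] [DecidableEq m] [CommSemiring R]
    (P : m → m → Prop) {y : Matrix m m R} (hy : ∀ i j, ¬ P i j → y i j = 0) :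
    y ∈ Submodule.span R {M | ∃ i j, P i j ∧ M = Matrix.single i j 1} := by
  rw [Matrix.matrix_eq_sum_single y]
  refine Submodule.sum_mem _ fun i _ => Submodule.sum_mem _ fun j _ => ?_
  by_cases hij : P i j
  · rw [← mul_one (y i j), ← smul_eq_mul, ← Matrix.smul_single]
    exact Submodule.smul_mem _ _ (Submodule.subset_span ⟨i, j, hij, rfl⟩)
  · simp [hy i j hij]

section Nilradical

variable (K : Type*) [CommRing K] {n : Type*} [Fintype n] [DecidableEq n]

noncomputable def envelopingNilradical (J : Set n) :
    Subalgebra K (UniversalEnvelopingAlgebra K (Matrix n n K)) :=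
  Algebra.adjoin K {w | ∃ i ∈ J, ∃ j ∉ J, w = ι K (Matrix.single i j (1:K))}

variable {K} {J : Set n}

lemma ι_mem_envelopingNilradical {y : Matrix n n K} (hy : ∀ i j, ¬ (i ∈ J ∧ j ∉ J) → y i j = 0) :
    ι K y ∈ envelopingNilradical K J := by
  have hspan := Matrix.mem_span_single_one _ hy
  have hle : Submodule.span K {M | ∃ i j, (i ∈ J ∧ j ∉ J) ∧ M = Matrix.single i j (1:K)} ≤
      (envelopingNilradical K J).toSubmodule.comap (ι K).toLinearMap := by
    rw [Submodule.span_le]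
    rintro _ ⟨i, j, ⟨hi, hj⟩, rfl⟩
    exact Algebra.subset_adjoin ⟨i, hi, j, hj, rfl⟩
  exact hle hspan

lemma lie_single_apply_eq_zero {x : Matrix n n K} (hx : ∀ i j, i ∈ J ∨ j ∈ J → x i j = 0)
    {a b : n} (ha : a ∈ J) (hb : b ∉ J) (i j : n) (hij : ¬ (i ∈ J ∧ j ∉ J)) :
    ⁅x, Matrix.single a b (1:K)⁆ i j = 0 := by
  have hxE : (x * Matrix.single a b (1:K)) i j = 0 := by
    rcases eq_or_ne j b with rfl | hjb
    · simp [hx i a (Or.inr ha)]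
    · exact Matrix.mul_single_apply_of_ne _ _ _ _ _ hjb _
  have hEx : (Matrix.single a b (1:K) * x) i j = 0 := by
    rcases eq_or_ne i a with rfl | hia
    · simp [hx b j (Or.inr (by tauto))]
    · exact Matrix.single_mul_apply_of_ne _ _ _ _ _ hia _
  rw [Ring.lie_def, Matrix.sub_apply, hxE, hEx, sub_zero]

lemma mul_sub_mul_mem_envelopingNilradical {x : Matrix n n K}
    (hx : ∀ i j, i ∈ J ∨ j ∈ J → x i j = 0) {z : UniversalEnvelopingAlgebra K (Matrix n n K)}
    (hz : z ∈ envelopingNilradical K J) : ι K x * z - z * ι K x ∈ envelopingNilradical K J := by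
  refine mul_sub_mul_mem_adjoin (fun s hs => ?_) hz
  obtain ⟨a, ha, b, hb, rfl⟩ := hs
  rw [← Ring.lie_def, ← LieHom.map_lie]
  exact ι_mem_envelopingNilradical (lie_single_apply_eq_zero hx ha hb)

end Nilradical

section Representation

variable {K : Type*} [CommRing K] {n : Type*} [Fintype n] [DecidableEq n]
  {ρ' : UniversalEnvelopingAlgebra K (Matrix n n K) →ₐ[K] Module.End K ((n → ℤ) →₀ K)}
  {J : Set n}

lemma boundaryWeightSpan_le_comap_rho
    (hroot : ∀ a b, a ≠ b → ρ' (ι K (Matrix.single a b 1)) = rootOp K a b)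
    (hdiag : ∀ k (ν : n → ℤ),
      ρ' (ι K (Matrix.single k k (1:K))) (Finsupp.single ν 1) = ν k • Finsupp.single ν 1)
    {i j : n} (hi : i ∉ J) (hj : j ∉ J) :
    boundaryWeightSpan K J ≤ (boundaryWeightSpan K J).comap (ρ' (ι K (Matrix.single i j 1))) := by
  rcases eq_or_ne i j with rfl | hij
  · exact boundaryWeightSpan_le_comap_of_forall_single fun μ => ⟨μ i, hdiag i μ⟩
  · rw [hroot i j hij]
    exact boundaryWeightSpan_le_comap_rootOp hi hj hij

lemma commute_intertwiner_of_mem_envelopingNilradical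
    (hroot : ∀ a b, a ≠ b → ρ' (ι K (Matrix.single a b 1)) = rootOp K a b)
    {i j : n} (hi : i ∉ J) (hj : j ∉ J) (hij : i ≠ j)
    {z : UniversalEnvelopingAlgebra K (Matrix n n K)}
    (hz : z ∈ envelopingNilradical K J) : Commute (intertwiner K i j) (ρ' z) := by
  have hρz : ρ' z ∈
      Algebra.adjoin K (ρ' '' {w | ∃ a ∈ J, ∃ b ∉ J, w = ι K (Matrix.single a b 1)}) := by
    rw [Algebra.adjoin_image]
    exact ⟨z, hz, rfl⟩
  refine Algebra.commute_of_mem_adjoin_of_forall_mem_commute hρz ?_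
  rintro _ ⟨_, ⟨a, ha, b, hb, rfl⟩, rfl⟩
  rw [hroot a b (ne_of_mem_of_not_mem ha hb)]
  exact commute_intertwiner_rootOp (ne_of_mem_of_not_mem ha hi) (ne_of_mem_of_not_mem ha hj) hij

lemma rho_lie_single_apply_zero_mem
    (hroot : ∀ a b, a ≠ b → ρ' (ι K (Matrix.single a b 1)) = rootOp K a b)
    (hdiag : ∀ k (ν : n → ℤ),
      ρ' (ι K (Matrix.single k k (1:K))) (Finsupp.single ν 1) = ν k • Finsupp.single ν 1)
    {z : UniversalEnvelopingAlgebra K (Matrix n n K)} (hz : z ∈ envelopingNilradical K J)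
    (hzδ : ρ' z (Finsupp.single 0 1) ∈ boundaryWeightSpan K J) {i j : n} (hi : i ∉ J) (hj : j ∉ J) :
    ρ' (ι K (Matrix.single i j 1) * z - z * ι K (Matrix.single i j 1)) (Finsupp.single 0 1) ∈
      boundaryWeightSpan K J := by
  rw [map_sub, map_mul, map_mul, LinearMap.sub_apply, Module.End.mul_apply, Module.End.mul_apply]
  refine sub_mem (boundaryWeightSpan_le_comap_rho hroot hdiag hi hj hzδ) ?_
  rcases eq_or_ne i j with rfl | hij
  · rw [hdiag, Pi.zero_apply, zero_smul, map_zero]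
    exact zero_mem _
  · have hδ : ρ' (ι K (Matrix.single i j 1)) (Finsupp.single 0 1) =
        -intertwiner K i j (Finsupp.single 0 1) := by
      rw [hroot i j hij]
      simp [rootOp, intertwiner]
    rw [hδ, map_neg, ← Module.End.mul_apply,
      ← (commute_intertwiner_of_mem_envelopingNilradical hroot hi hj hij hz).eq]
    exact neg_mem (boundaryWeightSpan_le_comap_intertwiner hi hj hij hzδ)

lemma rho_lie_apply_zero_mem
    (hroot : ∀ a b, a ≠ b → ρ' (ι K (Matrix.single a b 1)) = rootOp K a b)
    (hdiag : ∀ k (ν : n → ℤ),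
      ρ' (ι K (Matrix.single k k (1:K))) (Finsupp.single ν 1) = ν k • Finsupp.single ν 1)
    {z : UniversalEnvelopingAlgebra K (Matrix n n K)} (hz : z ∈ envelopingNilradical K J)
    (hzδ : ρ' z (Finsupp.single 0 1) ∈ boundaryWeightSpan K J) {x : Matrix n n K}
    (hx : ∀ i j, i ∈ J ∨ j ∈ J → x i j = 0) :
    ρ' (ι K x * z - z * ι K x) (Finsupp.single 0 1) ∈ boundaryWeightSpan K J := by
  let f : Matrix n n K →ₗ[K] ((n → ℤ) →₀ K) :=
    LinearMap.applyₗ (Finsupp.single 0 1) ∘ₗ ρ'.toLinearMap ∘ₗ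
      (LinearMap.mulRight K z - LinearMap.mulLeft K z) ∘ₗ (ι K).toLinearMap
  have hle : Submodule.span K {M | ∃ i j, (i ∉ J ∧ j ∉ J) ∧ M = Matrix.single i j (1:K)} ≤
      (boundaryWeightSpan K J).comap f := by
    rw [Submodule.span_le]
    rintro _ ⟨i, j, ⟨hi, hj⟩, rfl⟩
    exact rho_lie_single_apply_zero_mem hroot hdiag hz hzδ hi hj
  exact hle (Matrix.mem_span_single_one _ fun i j hij => hx i j (by tauto))

end Representation

theorem stmt_16_general (K : Type) [Field K] (d : ℕ)
    (ρ' : UniversalEnvelopingAlgebra K (Matrix (Fin (d+1)) (Fin (d+1)) K) →ₐ[K]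
        Module.End K ((Fin (d+1) → ℤ) →₀ K))
    (hρ'₁ : ∀ (i j : Fin (d+1)), i ≠ j → ∀ ν : Fin (d+1) → ℤ,
      ρ' (ι K (Matrix.single i j (1:K))) (Finsupp.single ν (1:K)) =
        (ν j - 1) • Finsupp.single (ν + Pi.single i 1 - Pi.single j 1) (1:K))
    (hρ'₂ : ∀ (k : Fin (d+1)) (ν : Fin (d+1) → ℤ),
      ρ' (ι K (Matrix.single k k (1:K))) (Finsupp.single ν (1:K)) =
        ν k • Finsupp.single ν (1:K))
    (J : Set (Fin (d+1)))
    (AJ : Subalgebra K (UniversalEnvelopingAlgebra K (Matrix (Fin (d+1)) (Fin (d+1)) K)))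
    (hAJ : AJ = Algebra.adjoin K
      {w | ∃ i ∈ J, ∃ j ∉ J, w = ι K (Matrix.single i j (1:K))})
    (z : UniversalEnvelopingAlgebra K (Matrix (Fin (d+1)) (Fin (d+1)) K))
    -- z ∈ M_J°
    (hz : z ∈ AJ)
    (hzδ : ρ' z (Finsupp.single (0 : Fin (d+1) → ℤ) (1:K)) ∈
      Submodule.span K {w : (Fin (d+1) → ℤ) →₀ K | ∃ μ : Fin (d+1) → ℤ,
        (∑ k, μ k) = 0 ∧ (∀ k ∈ J, μ k = 1) ∧ (∀ k ∉ J, μ k ≤ 0) ∧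
        w = Finsupp.single μ (1:K)} ⊔
      Submodule.span K {w : (Fin (d+1) → ℤ) →₀ K | ∃ μ : Fin (d+1) → ℤ,
        J ⊆ {k | 0 < μ k} ∧ J ≠ {k | 0 < μ k} ∧ w = Finsupp.single μ (1:K)})
    (x : Matrix (Fin (d+1)) (Fin (d+1)) K)
    (hx : ∀ i j : Fin (d+1), i ∈ J ∨ j ∈ J → x i j = 0) :
    (ι K x * z - z * ι K x) ∈ AJ ∧
    ρ' (ι K x * z - z * ι K x) (Finsupp.single (0 : Fin (d+1) → ℤ) (1:K)) ∈
      Submodule.span K {w : (Fin (d+1) → ℤ) →₀ K | ∃ μ : Fin (d+1) → ℤ,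
        (∑ k, μ k) = 0 ∧ (∀ k ∈ J, μ k = 1) ∧ (∀ k ∉ J, μ k ≤ 0) ∧
        w = Finsupp.single μ (1:K)} ⊔
      Submodule.span K {w : (Fin (d+1) → ℤ) →₀ K | ∃ μ : Fin (d+1) → ℤ,
        J ⊆ {k | 0 < μ k} ∧ J ≠ {k | 0 < μ k} ∧ w = Finsupp.single μ (1:K)} := by
  subst hAJ
  have hroot (a b : Fin (d+1)) (hab : a ≠ b) : ρ' (ι K (Matrix.single a b 1)) = rootOp K a b := by
    refine Finsupp.lhom_ext' fun ν => LinearMap.ext_ring ?_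
    simp only [LinearMap.comp_apply, Finsupp.lsingle_apply, hρ'₁ a b hab, rootOp,
      weightedShift_single, add_sub_assoc]
  exact ⟨mul_sub_mul_mem_envelopingNilradical hx hz, rho_lie_apply_zero_mem hroot hρ'₂ hz hzδ hx⟩

/-- For J a nonempty proper subset of {0,…,d}, z ∈ M_J° and x ∈ 𝔩(J),
the commutator ι(x)z − zι(x) again lies in M_J° (M_J° is ad(𝔩(J))-invariant). -/
theorem stmt_16 (K : Type) [Field K] [CharZero K] (d : ℕ) (hd : 1 ≤ d)
    (ρ' : UniversalEnvelopingAlgebra K (Matrix (Fin (d+1)) (Fin (d+1)) K) →ₐ[K]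
        Module.End K ((Fin (d+1) → ℤ) →₀ K))
    (hρ'₁ : ∀ (i j : Fin (d+1)), i ≠ j → ∀ ν : Fin (d+1) → ℤ,
      ρ' (ι K (Matrix.single i j (1:K))) (Finsupp.single ν (1:K)) =
        (ν j - 1) • Finsupp.single (ν + Pi.single i 1 - Pi.single j 1) (1:K))
    (hρ'₂ : ∀ (k : Fin (d+1)) (ν : Fin (d+1) → ℤ),
      ρ' (ι K (Matrix.single k k (1:K))) (Finsupp.single ν (1:K)) =
        ν k • Finsupp.single ν (1:K))
    (J : Set (Fin (d+1))) (hJ : J.Nonempty) (hJ' : J ≠ Set.univ)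
    (AJ : Subalgebra K (UniversalEnvelopingAlgebra K (Matrix (Fin (d+1)) (Fin (d+1)) K)))
    (hAJ : AJ = Algebra.adjoin K
      {w | ∃ i ∈ J, ∃ j ∉ J, w = ι K (Matrix.single i j (1:K))})
    (z : UniversalEnvelopingAlgebra K (Matrix (Fin (d+1)) (Fin (d+1)) K))
    -- z ∈ M_J°
    (hz : z ∈ AJ)
    (hzδ : ρ' z (Finsupp.single (0 : Fin (d+1) → ℤ) (1:K)) ∈
      Submodule.span K {w : (Fin (d+1) → ℤ) →₀ K | ∃ μ : Fin (d+1) → ℤ,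
        (∑ k, μ k) = 0 ∧ (∀ k ∈ J, μ k = 1) ∧ (∀ k ∉ J, μ k ≤ 0) ∧
        w = Finsupp.single μ (1:K)} ⊔
      Submodule.span K {w : (Fin (d+1) → ℤ) →₀ K | ∃ μ : Fin (d+1) → ℤ,
        J ⊆ {k | 0 < μ k} ∧ J ≠ {k | 0 < μ k} ∧ w = Finsupp.single μ (1:K)})
    (x : Matrix (Fin (d+1)) (Fin (d+1)) K)
    (hx : ∀ i j : Fin (d+1), i ∈ J ∨ j ∈ J → x i j = 0) :
    (ι K x * z - z * ι K x) ∈ AJ ∧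
    ρ' (ι K x * z - z * ι K x) (Finsupp.single (0 : Fin (d+1) → ℤ) (1:K)) ∈
      Submodule.span K {w : (Fin (d+1) → ℤ) →₀ K | ∃ μ : Fin (d+1) → ℤ,
        (∑ k, μ k) = 0 ∧ (∀ k ∈ J, μ k = 1) ∧ (∀ k ∉ J, μ k ≤ 0) ∧
        w = Finsupp.single μ (1:K)} ⊔
      Submodule.span K {w : (Fin (d+1) → ℤ) →₀ K | ∃ μ : Fin (d+1) → ℤ,
        J ⊆ {k | 0 < μ k} ∧ J ≠ {k | 0 < μ k} ∧ w = Finsupp.single μ (1:K)} :=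
  stmt_16_general K d ρ' hρ'₁ hρ'₂ J AJ hAJ z hz hzδ x hx
end
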